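/- arXiv:0711.5004 — 8 statements merged into one kernel-verified Lean document; each statement's English description precedes it below -/
import Mathlib

section
/- If ε_1 < ε_2 < ε_3 are elements of T = {0,1}^n, then δ(ε_1,ε_2) ≠ δ(ε_2,ε_3). -/
/-- `b(ε) = Σ_i ε_i · 2^i`, the number whose binary digits are given by `ε`. -/
def bval {n : ℕ} (ε : Fin n → Bool) : ℕ :=
  ∑ i, if ε i then 2 ^ (i : ℕ) else 0

/-- `δ(ε, ε')`: the largest coordinate at which `ε` and `ε'` differ. -/
def delta {n : ℕ} (ε ε' : Fin n → Bool) : ℕ :=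
  (Finset.univ.filter fun i => ε i ≠ ε' i).sup Fin.val

lemma bval_lt_of_top {n : ℕ} (ε ε' : Fin n → Bool) (i : Fin n)
    (hi : ε i = false) (hi' : ε' i = true)
    (hhi : ∀ j : Fin n, (i : ℕ) < (j : ℕ) → ε j = ε' j) :
    bval ε < bval ε' := by
  classical
  unfold bval
  have hsplit : ∀ (b : Fin n → Bool),
      (∑ j, if b j then 2 ^ (j : ℕ) else 0) =
      (∑ j ∈ Finset.univ.filter (fun j : Fin n => (j : ℕ) < (i : ℕ)),
        if b j then 2 ^ (j : ℕ) else 0) +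
      ((if b i then 2 ^ (i : ℕ) else 0) +
      (∑ j ∈ Finset.univ.filter (fun j : Fin n => (i : ℕ) < (j : ℕ)),
        if b j then 2 ^ (j : ℕ) else 0)) := by
    intro b
    rw [← Finset.sum_filter_add_sum_filter_not Finset.univ
      (fun j : Fin n => (j : ℕ) < (i : ℕ))]
    congr 1
    have : Finset.univ.filter (fun j : Fin n => ¬ (j : ℕ) < (i : ℕ)) =
        insert i (Finset.univ.filter (fun j : Fin n => (i : ℕ) < (j : ℕ))) := by
      ext j
      simp only [Finset.mem_filter, Finset.mem_univ, true_and, Finset.mem_insert,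
        not_lt]
      constructor
      · intro h
        rcases eq_or_lt_of_le h with h | h
        · left; exact (Fin.ext h.symm)
        · right; exact h
      · rintro (rfl | h)
        · exact le_refl _
        · exact le_of_lt h
    rw [this, Finset.sum_insert (by simp)]
  have heq : (∑ j ∈ Finset.univ.filter (fun j : Fin n => (i : ℕ) < (j : ℕ)),
        if ε j then 2 ^ (j : ℕ) else 0) =
      (∑ j ∈ Finset.univ.filter (fun j : Fin n => (i : ℕ) < (j : ℕ)),
        if ε' j then 2 ^ (j : ℕ) else 0) := by
    apply Finset.sum_congr rfl
    intro j hj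
    rw [hhi j (Finset.mem_filter.mp hj).2]
  have gs : ∀ m : ℕ, (∑ k ∈ Finset.range m, 2 ^ k) + 1 = 2 ^ m := by
    intro m
    induction m with
    | zero => simp
    | succ m ih => rw [Finset.sum_range_succ, pow_succ]; omega
  have hlow : (∑ j ∈ Finset.univ.filter (fun j : Fin n => (j : ℕ) < (i : ℕ)),
      if ε j then 2 ^ (j : ℕ) else 0) < 2 ^ (i : ℕ) := by
    have step1 : (∑ j ∈ Finset.univ.filter (fun j : Fin n => (j : ℕ) < (i : ℕ)),
        if ε j then 2 ^ (j : ℕ) else 0)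
        ≤ ∑ j ∈ Finset.univ.filter (fun j : Fin n => (j : ℕ) < (i : ℕ)),
          2 ^ (j : ℕ) := by
      apply Finset.sum_le_sum; intro j _; split <;> simp
    have step2 : (∑ j ∈ Finset.univ.filter (fun j : Fin n => (j : ℕ) < (i : ℕ)),
        2 ^ (j : ℕ)) ≤ ∑ k ∈ Finset.range (i : ℕ), 2 ^ k := by
      rw [show (∑ j ∈ Finset.univ.filter (fun j : Fin n => (j : ℕ) < (i : ℕ)),
          2 ^ (j : ℕ)) =
          ∑ k ∈ (Finset.univ.filter
            (fun j : Fin n => (j : ℕ) < (i : ℕ))).image Fin.val, 2 ^ k from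
        (Finset.sum_image (fun a _ b _ h => Fin.ext h)).symm]
      apply Finset.sum_le_sum_of_subset
      intro k hk
      simp only [Finset.mem_image, Finset.mem_filter, Finset.mem_univ,
        true_and] at hk
      obtain ⟨j, hj, rfl⟩ := hk
      exact Finset.mem_range.mpr hj
    have := gs (i : ℕ)
    omega
  rw [hsplit ε, hsplit ε', heq]
  simp only [hi, hi', if_true, Bool.false_eq_true, if_false]
  omega

lemma top_bits {n : ℕ} (ε ε' : Fin n → Bool) (h : bval ε < bval ε') :
    ∃ i : Fin n, (i : ℕ) = delta ε ε' ∧ ε i = false ∧ ε' i = true ∧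
      ∀ j : Fin n, (i : ℕ) < (j : ℕ) → ε j = ε' j := by
  classical
  set s := Finset.univ.filter fun i : Fin n => ε i ≠ ε' i with hs
  have hne : s.Nonempty := by
    by_contra h'
    rw [Finset.not_nonempty_iff_eq_empty] at h'
    have : ε = ε' := by
      funext j
      by_contra hj
      have : j ∈ s := by simp [hs, hj]
      simp [h'] at this
    rw [this] at h
    exact lt_irrefl _ h
  obtain ⟨i, hi, hival⟩ := Finset.exists_mem_eq_sup s hne Fin.val
  have hdiff : ε i ≠ ε' i := (Finset.mem_filter.mp hi).2
  have htop : ∀ j : Fin n, (i : ℕ) < (j : ℕ) → ε j = ε' j := by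
    intro j hj
    by_contra hj'
    have : j ∈ s := by simp [hs, hj']
    have := Finset.le_sup (f := Fin.val) this
    omega
  refine ⟨i, hival.symm, ?_⟩
  cases h1 : ε i with
  | false =>
    refine ⟨rfl, ?_, htop⟩
    cases h2 : ε' i with
    | false => simp [h1, h2] at hdiff
    | true => rfl
  | true =>
    exfalso
    have h2 : ε' i = false := by
      cases h2 : ε' i with
      | false => rfl
      | true => simp [h1, h2] at hdiff
    have := bval_lt_of_top ε' ε i h2 h1 (fun j hj => (htop j hj).symm)
    omega

/-- **Property (a).** If `ε₁ < ε₂ < ε₃` in `T = {0,1}ⁿ` (ordered via `b`), then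
`δ(ε₁, ε₂) ≠ δ(ε₂, ε₃)`. -/
theorem delta_ne_of_chain {n : ℕ} (ε₁ ε₂ ε₃ : Fin n → Bool)
    (h₁₂ : bval ε₁ < bval ε₂) (h₂₃ : bval ε₂ < bval ε₃) :
    delta ε₁ ε₂ ≠ delta ε₂ ε₃ := by
  obtain ⟨i, hi, -, hi2, -⟩ := top_bits ε₁ ε₂ h₁₂
  obtain ⟨j, hj, hj2, -, -⟩ := top_bits ε₂ ε₃ h₂₃
  intro hcontra
  have : i = j := Fin.ext (by omega)
  rw [this, hj2] at hi2
  simp at hi2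
end

section
/- If ε_1 < ε_2 < ⋯ < ε_m are elements of T = {0,1}^n (with m ≥ 2), then δ(ε_1, ε_m) = max_{1 ≤ i ≤ m−1} δ(ε_i, ε_{i+1}). -/
lemma bval_lt {n : ℕ} (ε : Fin n → Bool) : bval ε < 2 ^ n := by
  induction n with
  | zero => simp [bval]
  | succ n ih =>
    have h : bval ε = (if ε (Fin.last n) then 2 ^ n else 0)
        + bval (fun k : Fin n => ε k.castSucc) := by
      rw [bval, Fin.sum_univ_castSucc, add_comm]; rfl
    have := ih (fun k : Fin n => ε k.castSucc)
    rw [h, pow_succ]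
    split <;> omega

lemma testBit_bval {n : ℕ} (ε : Fin n → Bool) (i : Fin n) :
    (bval ε).testBit i = ε i := by
  induction n with
  | zero => exact i.elim0
  | succ n ih =>
    have h : bval ε = 2 ^ n * (if ε (Fin.last n) then 1 else 0)
        + bval (fun k : Fin n => ε k.castSucc) := by
      rw [bval, Fin.sum_univ_castSucc, add_comm]
      congr 1
      split <;> simp
    rw [h, Nat.testBit_two_pow_mul_add _ (bval_lt _)]
    rcases lt_or_ge (i : ℕ) n with hi | hi
    · rw [if_pos hi]
      have := ih (fun k : Fin n => ε k.castSucc) ⟨i, hi⟩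
      simpa [Fin.castSucc] using this
    · have hie : (i : ℕ) = n := by omega
      rw [if_neg (by omega), hie, Nat.sub_self]
      have : i = Fin.last n := Fin.ext hie
      rw [this]
      split <;> simp_all

lemma bval_lt_of_bits {n : ℕ} {x y : Fin n → Bool} (j : Fin n)
    (hx : x j = false) (hy : y j = true) (hk : ∀ k, j < k → x k = y k) :
    bval x < bval y := by
  apply Nat.lt_of_testBit (j : ℕ)
  · rw [testBit_bval]; exact hx
  · rw [testBit_bval]; exact hy
  · intro k hk'
    rcases lt_or_ge k n with h | h
    · rw [testBit_bval _ ⟨k, h⟩, testBit_bval _ ⟨k, h⟩]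
      rw [hk ⟨k, h⟩ hk']
    · rw [Nat.testBit_lt_two_pow, Nat.testBit_lt_two_pow]
      · exact lt_of_lt_of_le (bval_lt y) (Nat.pow_le_pow_right (by norm_num) h)
      · exact lt_of_lt_of_le (bval_lt x) (Nat.pow_le_pow_right (by norm_num) h)

lemma exists_leading {n : ℕ} {x y : Fin n → Bool} (h : bval x < bval y) :
    ∃ j : Fin n, x j = false ∧ y j = true ∧ (∀ k, j < k → x k = y k)
      ∧ (j : ℕ) = delta x y := by
  have hne : x ≠ y := by rintro rfl; exact lt_irrefl _ h
  have hs : (Finset.univ.filter fun i => x i ≠ y i).Nonempty := by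
    rcases Function.ne_iff.mp hne with ⟨i, hi⟩
    exact ⟨i, by simp [hi]⟩
  obtain ⟨j, hj, hjs⟩ := Finset.exists_mem_eq_sup _ hs Fin.val
  have hjxy : x j ≠ y j := by simpa using hj
  have habove : ∀ k, j < k → x k = y k := by
    intro k hlt
    by_contra hne'
    have : (k : ℕ) ≤ delta x y := Finset.le_sup (by simp [hne'])
    rw [delta] at this
    omega
  have hxj : x j = false ∧ y j = true := by
    rcases Bool.eq_false_or_eq_true (x j) with hx | hx
    · exfalso
      have hyj : y j = false := by revert hjxy; cases hy : y j <;> simp [hx, hy]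
      have := bval_lt_of_bits j hyj hx (fun k hk => (habove k hk).symm)
      omega
    · exact ⟨hx, by revert hjxy; cases hy : y j <;> simp [hx, hy]⟩
  exact ⟨j, hxj.1, hxj.2, habove, hjs.symm⟩

lemma delta_ultra {n : ℕ} (x y z : Fin n → Bool) :
    delta x z ≤ max (delta x y) (delta y z) := by
  apply Finset.sup_le
  intro i hi
  simp only [Finset.mem_filter] at hi
  by_cases h : x i = y i
  · have : y i ≠ z i := by rw [← h]; exact hi.2
    exact le_max_of_le_right (Finset.le_sup (by simp [this]))
  · exact le_max_of_le_left (Finset.le_sup (by simp [h]))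

lemma delta_left_le {n : ℕ} {x y z : Fin n → Bool}
    (hxy : bval x < bval y) (hyz : bval y < bval z) :
    delta x y ≤ delta x z := by
  obtain ⟨j, hxj, hzj, hab, hjv⟩ := exists_leading (hxy.trans hyz)
  obtain ⟨j', hxj', hyj', hab', hjv'⟩ := exists_leading hxy
  by_contra hlt
  push_neg at hlt
  have hjj : j < j' := by rw [Fin.lt_def]; omega
  have h1 : z j' = false := by rw [← hab j' hjj]; exact hxj'
  have h2 : ∀ k, j' < k → z k = y k := fun k hk =>
    ((hab k (hjj.trans hk)).symm.trans (hab' k hk))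
  have := bval_lt_of_bits j' h1 hyj' h2
  omega

lemma delta_right_le {n : ℕ} {x y z : Fin n → Bool}
    (hxy : bval x < bval y) (hyz : bval y < bval z) :
    delta y z ≤ delta x z := by
  obtain ⟨j, hxj, hzj, hab, hjv⟩ := exists_leading (hxy.trans hyz)
  obtain ⟨j', hyj', hzj', hab', hjv'⟩ := exists_leading hyz
  by_contra hlt
  push_neg at hlt
  have hjj : j < j' := by rw [Fin.lt_def]; omega
  have h1 : x j' = true := by rw [hab j' hjj]; exact hzj'
  have h2 : ∀ k, j' < k → y k = x k := fun k hk =>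
    ((hab' k hk).trans (hab k (hjj.trans hk)).symm)
  have := bval_lt_of_bits j' hyj' h1 h2
  omega

/-- **Property (b).** If `ε₀ < ε₁ < ⋯ < ε_m` is a chain in `T = {0,1}ⁿ`
(ordered via `b`) with at least two elements, then
`δ(ε₀, ε_m) = max_{0 ≤ i ≤ m-1} δ(ε_i, ε_{i+1})`. -/
theorem delta_ends_eq_max_consecutive {n m : ℕ} (hm : 1 ≤ m)
    (ε : Fin (m + 1) → Fin n → Bool)
    (hε : ∀ i j : Fin (m + 1), i < j → bval (ε i) < bval (ε j)) :
    delta (ε 0) (ε (Fin.last m)) =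
      Finset.univ.sup (fun i : Fin m => delta (ε i.castSucc) (ε i.succ)) := by
  apply le_antisymm
  · -- by induction: delta (ε 0) (ε k) ≤ sup
    have key : ∀ k : ℕ, ∀ hk : k ≤ m,
        delta (ε 0) (ε ⟨k, by omega⟩) ≤
          Finset.univ.sup (fun i : Fin m => delta (ε i.castSucc) (ε i.succ)) := by
      intro k
      induction k with
      | zero =>
        intro _
        have : (⟨0, by omega⟩ : Fin (m+1)) = 0 := rfl
        rw [this]
        simp [delta]
      | succ k ih =>
        intro hk
        have hk' : k ≤ m := by omega
        have step := delta_ultra (ε 0) (ε ⟨k, by omega⟩) (ε ⟨k+1, by omega⟩)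
        have hcons : delta (ε ⟨k, by omega⟩) (ε ⟨k+1, by omega⟩) ≤
            Finset.univ.sup (fun i : Fin m => delta (ε i.castSucc) (ε i.succ)) := by
          have := Finset.le_sup (f := fun i : Fin m => delta (ε i.castSucc) (ε i.succ))
            (Finset.mem_univ ⟨k, by omega⟩)
          simpa [Fin.castSucc, Fin.succ, Fin.castAdd, Fin.castLE] using this
        exact le_trans step (max_le (ih hk') hcons)
    have := key m le_rfl
    simpa [Fin.last] using this
  · apply Finset.sup_le
    intro i _
    -- delta (ε i.castSucc) (ε i.succ) ≤ delta (ε 0) (ε last)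
    have h1 : delta (ε i.castSucc) (ε i.succ) ≤ delta (ε i.castSucc) (ε (Fin.last m)) := by
      rcases eq_or_lt_of_le (Fin.le_last i.succ) with heq | hlt
      · rw [heq]
      · exact delta_left_le (hε _ _ (Fin.castSucc_lt_succ (i := i))) (hε _ _ hlt)
    have h2 : delta (ε i.castSucc) (ε (Fin.last m)) ≤ delta (ε 0) (ε (Fin.last m)) := by
      rcases eq_or_lt_of_le (Fin.zero_le i.castSucc) with heq | hlt
      · rw [← heq]
      · exact delta_right_le (hε _ _ hlt)
          (hε _ _ (lt_of_lt_of_le (Fin.castSucc_lt_succ (i := i)) (Fin.le_last i.succ)))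
    exact h1.trans h2
end

section
/- If ε_1 < ε_2 < ⋯ < ε_m are elements of T = {0,1}^n (with m ≥ 2), then the set of all pairwise values {δ(ε_i, ε_j) : 1 ≤ i < j ≤ m} equals the set of consecutive values {δ(ε_i, ε_{i+1}) : 1 ≤ i ≤ m−1}. -/
lemma sum_two_pow_lt (m : ℕ) : ∑ j ∈ Finset.range m, 2^j < 2^m := by
  induction m with
  | zero => simp
  | succ k ih => rw [Finset.sum_range_succ, pow_succ]; omega

lemma bval_lt_of_bit {n : ℕ} (a b : Fin n → Bool) (i : Fin n)
    (ha : a i = false) (hb : b i = true)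
    (hk : ∀ k : Fin n, i < k → a k = b k) : bval a < bval b := by
  have hsplit : ∀ (t : Fin n → Bool), bval t =
      (∑ k ∈ Finset.Iio i, if t k then 2^(k:ℕ) else 0) +
      ((if t i then 2^(i:ℕ) else 0) +
       ∑ k ∈ Finset.Ioi i, if t k then 2^(k:ℕ) else 0) := by
    intro t
    have h1 : (Finset.univ : Finset (Fin n)) = Finset.Iio i ∪ (insert i (Finset.Ioi i)) := by
      ext k; simp; omega
    have hdisj : Disjoint (Finset.Iio i) (insert i (Finset.Ioi i)) := by
      simp only [Finset.disjoint_left, Finset.mem_Iio, Finset.mem_insert, Finset.mem_Ioi]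
      intro k hk2 hk3
      rcases hk3 with h | h
      · exact absurd h (by omega)
      · omega
    rw [bval, h1, Finset.sum_union hdisj, Finset.sum_insert (by simp)]
  rw [hsplit a, hsplit b, ha, hb]
  have heq : ∑ k ∈ Finset.Ioi i, (if a k then 2^(k:ℕ) else 0) =
      ∑ k ∈ Finset.Ioi i, (if b k then 2^(k:ℕ) else 0) := by
    apply Finset.sum_congr rfl
    intro k hk2
    rw [hk k (Finset.mem_Ioi.mp hk2)]
  have hlow : ∑ k ∈ Finset.Iio i, (if a k then 2^(k:ℕ) else 0) < 2^(i:ℕ) := by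
    calc ∑ k ∈ Finset.Iio i, (if a k then 2^(k:ℕ) else 0)
        ≤ ∑ k ∈ Finset.Iio i, 2^(k:ℕ) := by
          apply Finset.sum_le_sum; intro k _; split <;> simp
      _ = ∑ j ∈ (Finset.Iio i).image Fin.val, 2^j := by
          rw [Finset.sum_image]; intro x _ y _ h; exact Fin.ext h
      _ ≤ ∑ j ∈ Finset.range (i:ℕ), 2^j := by
          apply Finset.sum_le_sum_of_subset
          intro j hj
          simp only [Finset.mem_image, Finset.mem_Iio] at hj
          obtain ⟨x, hx, rfl⟩ := hj
          simpa using hx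
      _ < 2^(i:ℕ) := sum_two_pow_lt _
  rw [heq]
  simp only [if_pos rfl, Bool.false_eq_true, if_false, if_true]
  omega

lemma delta_agree {n : ℕ} (a b : Fin n → Bool) (k : Fin n)
    (h : delta a b < (k : ℕ)) : a k = b k := by
  by_contra hne
  have : k ∈ Finset.univ.filter fun i => a i ≠ b i := by simp [hne]
  have := Finset.le_sup (f := Fin.val) this
  rw [delta] at h; omega

lemma delta_bits {n : ℕ} (a b : Fin n → Bool) (h : bval a < bval b) :
    ∃ i : Fin n, (i : ℕ) = delta a b ∧ a i = false ∧ b i = true := by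
  have hne : a ≠ b := by intro he; rw [he] at h; omega
  obtain ⟨i0, hi0⟩ := Function.ne_iff.mp hne
  have hnonempty : (Finset.univ.filter fun i => a i ≠ b i).Nonempty :=
    ⟨i0, by simp [hi0]⟩
  obtain ⟨i, hi, hsup⟩ := Finset.exists_mem_eq_sup _ hnonempty Fin.val
  simp only [Finset.mem_filter, Finset.mem_univ, true_and] at hi
  refine ⟨i, hsup.symm ▸ rfl, ?_⟩
  rcases Bool.eq_false_or_eq_true (a i) with ha | ha <;>
    rcases Bool.eq_false_or_eq_true (b i) with hb | hb
  · exact absurd (ha.trans hb.symm) hi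
  · exfalso
    have : bval b < bval a := by
      apply bval_lt_of_bit b a i hb ha
      intro k hk
      have hdk : delta a b < (k : ℕ) := by
        rw [delta, hsup]; exact Fin.lt_def.mp hk
      exact (delta_agree a b k hdk).symm
    omega
  · exact ⟨ha, hb⟩
  · exact absurd (ha.trans hb.symm) hi

lemma delta_le_iff {n : ℕ} (a b : Fin n → Bool) (d : ℕ)
    (h : ∀ k : Fin n, d < (k : ℕ) → a k = b k) : delta a b ≤ d := by
  rw [delta]
  apply Finset.sup_le
  intro k hk
  simp only [Finset.mem_filter, Finset.mem_univ, true_and] at hk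
  by_contra hc
  exact hk (h k (by omega))

lemma delta_max {n : ℕ} (a b c : Fin n → Bool)
    (hab : bval a < bval b) (hbc : bval b < bval c) :
    delta a c = max (delta a b) (delta b c) := by
  obtain ⟨i, hi, hai, hbi⟩ := delta_bits a b hab
  obtain ⟨j, hj, hbj, hcj⟩ := delta_bits b c hbc
  have hne : delta a b ≠ delta b c := by
    intro h
    have : i = j := Fin.ext (by omega)
    rw [this, hbj] at hbi; exact absurd hbi (by simp)
  rcases lt_or_gt_of_ne hne with hlt | hgt
  · -- delta a b < delta b c, so delta a c = delta b c
    have haj : a j = b j := delta_agree a b j (by omega)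
    have hle : delta a c ≤ delta b c := by
      apply delta_le_iff
      intro k hk
      rw [delta_agree a b k (by omega), delta_agree b c k hk]
    have hge : delta b c ≤ delta a c := by
      rw [← hj, delta]
      apply Finset.le_sup
      simp only [Finset.mem_filter, Finset.mem_univ, true_and]
      rw [haj, hbj, hcj]; simp
    omega
  · -- delta b c < delta a b, so delta a c = delta a b
    have hci : c i = b i := (delta_agree b c i (by omega)).symm
    have hle : delta a c ≤ delta a b := by
      apply delta_le_iff
      intro k hk
      rw [delta_agree a b k hk, delta_agree b c k (by omega)]
    have hge : delta a b ≤ delta a c := by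
      rw [← hi, delta]
      apply Finset.le_sup
      simp only [Finset.mem_filter, Finset.mem_univ, true_and]
      rw [hai, hci, hbi]; simp
    omega

/-- If `ε₀ < ε₁ < ⋯ < ε_m` is a chain in `T = {0,1}ⁿ` (ordered via `b`) with at
least two elements, then the set of all pairwise values `{δ(ε_i, ε_j) : i < j}`
equals the set of consecutive values `{δ(ε_i, ε_{i+1}) : 0 ≤ i ≤ m-1}`. -/
theorem pairwise_delta_eq_consecutive_delta {n m : ℕ} (hm : 1 ≤ m)
    (ε : Fin (m + 1) → Fin n → Bool)
    (hε : ∀ i j : Fin (m + 1), i < j → bval (ε i) < bval (ε j)) :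
    (((Finset.univ : Finset (Fin (m + 1) × Fin (m + 1))).filter
        fun p => p.1 < p.2).image fun p => delta (ε p.1) (ε p.2)) =
      Finset.univ.image (fun i : Fin m => delta (ε i.castSucc) (ε i.succ)) := by

  apply Finset.Subset.antisymm
  · -- hard direction
    have main : ∀ (d : ℕ) (i j : Fin (m + 1)), (j : ℕ) = (i : ℕ) + d → i < j →
        delta (ε i) (ε j) ∈
          Finset.univ.image (fun i : Fin m => delta (ε i.castSucc) (ε i.succ)) := by
      intro d
      induction d using Nat.strong_induction_on with
      | _ d ih =>
        intro i j hd hij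
        have hij' : (i : ℕ) < (j : ℕ) := Fin.lt_def.mp hij
        rcases eq_or_lt_of_le (by omega : 1 ≤ d) with h1 | h2
        · -- consecutive
          have hiltm : (i : ℕ) < m := by have := j.isLt; omega
          set k : Fin m := ⟨(i : ℕ), hiltm⟩ with hk
          have h1 : i = k.castSucc := by apply Fin.ext; simp [hk]
          have h2 : j = k.succ := by apply Fin.ext; simp [hk]; omega
          rw [h1, h2]
          exact Finset.mem_image_of_mem _ (Finset.mem_univ k)
        · -- split at j - 1
          set p : Fin (m + 1) := ⟨(j : ℕ) - 1, by have := j.isLt; omega⟩ with hp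
          have hip : i < p := by rw [Fin.lt_def]; simp [hp]; omega
          have hpj : p < j := by rw [Fin.lt_def]; show (j:ℕ) - 1 < j; omega
          have hmax := delta_max (ε i) (ε p) (ε j) (hε i p hip) (hε p j hpj)
          have m1 := ih (d - 1) (by omega) i p (by simp [hp]; omega) hip
          have m2 := ih 1 (by omega) p j (by simp [hp]; omega) hpj
          rw [hmax]
          rcases max_choice (delta (ε i) (ε p)) (delta (ε p) (ε j)) with h | h <;>
            rw [h] <;> assumption
    intro x hx
    simp only [Finset.mem_image, Finset.mem_filter, Finset.mem_univ, true_and] at hx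
    obtain ⟨⟨i, j⟩, hij, rfl⟩ := hx
    dsimp only at hij ⊢
    exact main ((j : ℕ) - (i : ℕ)) i j (by have := Fin.lt_def.mp hij; omega) hij
  · -- easy direction
    intro x hx
    simp only [Finset.mem_image, Finset.mem_univ, true_and] at hx
    obtain ⟨k, rfl⟩ := hx
    simp only [Finset.mem_image, Finset.mem_filter, Finset.mem_univ, true_and]
    exact ⟨(k.castSucc, k.succ), Fin.castSucc_lt_succ, rfl⟩
end

section
/- Let G be a simple graph on {1,…,n} and let ε_1 < ε_2 < ⋯ < ε_{l+1} be elements of T = {0,1}^n such that every triple {ε_i, ε_j, ε_k} (i < j < k) has colour C_1 in the stepping-up colouring. Then, writing δ_i = δ(ε_i, ε_{i+1}) for 1 ≤ i ≤ l, the values satisfy δ_1 < δ_2 < ⋯ < δ_l and {δ_1,…,δ_l} is a clique of size l in G. -/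
open scoped Classical in
noncomputable def colour {n : ℕ} (G : SimpleGraph ℕ) (ε₁ ε₂ ε₃ : Fin n → Bool) : Fin 3 :=
  if G.Adj (delta ε₁ ε₂) (delta ε₂ ε₃) then
    (if delta ε₁ ε₂ < delta ε₂ ε₃ then 0 else 1)
  else 2

lemma le_delta {n : ℕ} {a b : Fin n → Bool} {i : Fin n} (h : a i ≠ b i) :
    i.val ≤ delta a b :=
  Finset.le_sup (by simp [h])

lemma delta_exists {n : ℕ} {a b : Fin n → Bool} (h : a ≠ b) :
    ∃ m : Fin n, a m ≠ b m ∧ m.val = delta a b := by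
  have hne : (Finset.univ.filter fun i => a i ≠ b i).Nonempty := by
    rcases Function.ne_iff.mp h with ⟨i, hi⟩
    exact ⟨i, by simp [hi]⟩
  obtain ⟨m, hm, hm'⟩ := Finset.exists_mem_eq_sup _ hne Fin.val
  exact ⟨m, by simpa using hm, hm'.symm⟩

lemma delta_trans {n : ℕ} {a b c : Fin n → Bool} (hbc : b ≠ c)
    (h : delta a b < delta b c) : delta a c = delta b c := by
  obtain ⟨m, hm, hmv⟩ := delta_exists hbc
  have hab : a m = b m := by
    by_contra hab
    exact absurd (le_delta hab) (by omega)
  have hac : a m ≠ c m := by rw [hab]; exact hm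
  refine le_antisymm (Finset.sup_le ?_) (hmv ▸ le_delta hac)
  intro k hk
  simp only [Finset.mem_filter] at hk
  by_cases hk1 : a k = b k
  · exact le_delta (fun hbc' => hk.2 (hk1.trans hbc'))
  · exact le_trans (le_delta hk1) (le_of_lt h)

lemma colour_eq_zero {n : ℕ} {G : SimpleGraph ℕ} {a b c : Fin n → Bool}
    (h : colour G a b c = 0) :
    G.Adj (delta a b) (delta b c) ∧ delta a b < delta b c := by
  unfold colour at h
  split_ifs at h with h1 h2
  · exact ⟨h1, h2⟩
  · exact absurd h (by decide)
  · exact absurd h (by decide)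

set_option maxHeartbeats 2000000 in
/-- If `G` is a simple graph on `{1,…,n}` and `ε₁ < ⋯ < ε_{l+1}` is a chain in
`T = {0,1}ⁿ` all of whose triples receive colour `C₁` in the stepping-up
colouring, then the consecutive values `δ_i = δ(ε_i, ε_{i+1})` are strictly
increasing and form a clique of size `l` in `G`. -/
theorem colour_one_clique {n l : ℕ} (G : SimpleGraph ℕ)
    (hG : ∀ a b, G.Adj a b → a < n ∧ b < n)
    (ε : Fin (l + 1) → Fin n → Bool)
    (hε : ∀ i j : Fin (l + 1), i < j → bval (ε i) < bval (ε j))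
    (hcol : ∀ i j k : Fin (l + 1), i < j → j < k →
      colour G (ε i) (ε j) (ε k) = 0) :
    (∀ i j : Fin l, i < j →
        delta (ε i.castSucc) (ε i.succ) < delta (ε j.castSucc) (ε j.succ)) ∧
      G.IsNClique l
        (Finset.univ.image fun i : Fin l => delta (ε i.castSucc) (ε i.succ)) := by
  obtain ⟨d, hd⟩ : ∃ d : Fin l → ℕ, d = fun i => delta (ε i.castSucc) (ε i.succ) :=
    ⟨_, rfl⟩
  have hdfun : ∀ i : Fin l, delta (ε i.castSucc) (ε i.succ) = d i := fun i => by rw [hd]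
  simp only [hdfun]
  have hdmk : ∀ (i : ℕ) (h : i < l),
      d ⟨i, h⟩ = delta (ε ⟨i, by omega⟩) (ε ⟨i + 1, by omega⟩) := by
    intro i h
    rw [hd]
    rfl
  have hεne : ∀ i j : Fin (l + 1), i < j → ε i ≠ ε j := by
    intro i j hij hc
    exact absurd (hε i j hij) (by rw [hc]; exact lt_irrefl _)
  have step : ∀ (i : ℕ) (h : i + 1 < l), d ⟨i, by omega⟩ < d ⟨i + 1, h⟩ := by
    intro i h
    have := (colour_eq_zero (hcol ⟨i, by omega⟩ ⟨i + 1, by omega⟩ ⟨i + 2, by omega⟩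
      (Fin.mk_lt_mk.mpr (by omega)) (Fin.mk_lt_mk.mpr (by omega)))).2
    rw [hdmk i (by omega), hdmk (i + 1) h]
    exact this
  have hmono : StrictMono d := by
    have main : ∀ (k : ℕ) (i j : Fin l), i < j → j.val ≤ k → d i < d j := by
      intro k
      induction k with
      | zero => intro i j hij hj; exact absurd (Fin.lt_def.mp hij) (by omega)
      | succ k ih =>
        intro i j hij hj
        rcases Nat.lt_or_ge j.val (k + 1) with h | h
        · exact ih i j hij (by omega)
        · have hjv : j.val = k + 1 := by omega
          have hk : k + 1 < l := hjv ▸ j.isLt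
          have hjeq : d j = d ⟨k + 1, hk⟩ := congrArg d (Fin.ext hjv)
          rw [hjeq]
          rcases Nat.lt_or_ge i.val k with h' | h'
          · calc d i < d ⟨k, by omega⟩ :=
                  ih i ⟨k, by omega⟩ (Fin.lt_def.mpr h') (le_refl _)
              _ < d ⟨k + 1, hk⟩ := step k hk
          · have hiv : i.val = k := by have := Fin.lt_def.mp hij; omega
            have : d i = d ⟨k, by omega⟩ := congrArg d (Fin.ext hiv)
            rw [this]; exact step k hk
    exact fun i j hij => main j.val i j hij (le_refl _)
  have key : ∀ (jn : ℕ) (hj : jn < l) (i : Fin (l + 1)), i.val ≤ jn →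
      delta (ε i) (ε ⟨jn + 1, by omega⟩) = d ⟨jn, hj⟩ := by
    intro jn
    induction jn with
    | zero =>
      intro hj i hi
      have hi0 : i = ⟨0, by omega⟩ := Fin.ext (Nat.le_zero.mp hi)
      rw [hi0, hdmk 0 hj]
    | succ jn ih =>
      intro hj i hi
      rcases Nat.lt_or_ge i.val (jn + 1) with h | h
      · have h1 := ih (by omega) i (by omega)
        have h2 : delta (ε ⟨jn + 1, by omega⟩) (ε ⟨jn + 2, by omega⟩) = d ⟨jn + 1, hj⟩ :=
          (hdmk (jn + 1) hj).symm
        have hlt : delta (ε i) (ε ⟨jn + 1, by omega⟩) <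
            delta (ε ⟨jn + 1, by omega⟩) (ε ⟨jn + 2, by omega⟩) := by
          rw [h1, h2]
          exact hmono (Fin.mk_lt_mk.mpr (by omega))
        rw [delta_trans (hεne _ _ (Fin.mk_lt_mk.mpr (by omega))) hlt, h2]
      · have hie : i = ⟨jn + 1, by omega⟩ := Fin.ext (show i.val = jn + 1 by omega)
        rw [hie, hdmk (jn + 1) hj]
  have adj : ∀ i j : Fin l, i < j → G.Adj (d i) (d j) := by
    intro i j hij
    have hc := colour_eq_zero (hcol i.castSucc i.succ j.succ
      (Fin.castSucc_lt_succ : i.castSucc < i.succ) (Fin.succ_lt_succ_iff.mpr hij))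
    have hsj : ε j.succ = ε ⟨j.val + 1, by omega⟩ := congrArg ε (Fin.ext rfl)
    have hk : delta (ε i.succ) (ε j.succ) = d j := by
      rw [hsj]
      exact key j.val j.isLt i.succ (by simpa using Fin.lt_def.mp hij)
    rw [hk, hdfun] at hc
    exact hc.1
  refine ⟨fun i j hij => hmono hij, ?_, ?_⟩
  · intro x hx y hy hxy
    simp only [Finset.coe_image, Set.mem_image, Finset.mem_coe, Finset.coe_univ,
      Set.image_univ, Set.mem_range] at hx hy
    obtain ⟨i, rfl⟩ := hx
    obtain ⟨j, rfl⟩ := hy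
    rcases lt_trichotomy i j with h | h | h
    · exact adj i j h
    · exact absurd (congrArg d h) hxy
    · exact (adj j i h).symm
  · rw [Finset.card_image_of_injective _ hmono.injective, Finset.card_univ, Fintype.card_fin]
end

section
/- Let G be a simple graph on {1,…,n} and let ε_1 < ε_2 < ⋯ < ε_{l+1} be elements of T = {0,1}^n such that every triple {ε_i, ε_j, ε_k} (i < j < k) has colour C_3 in the stepping-up colouring. Then every edge of the associated graph J is a non-edge of G; that is, J is a subgraph of the complement of G. -/
/-- Adjacency in the graph `J` associated to a chain `ε₁ < ⋯ < ε_{l+1}`: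
its vertices are the consecutive values `D = {δ(ε_i, ε_{i+1}) : 1 ≤ i ≤ l}`,
and distinct `a, b ∈ D` are joined iff there exist `r < s < t` with
`{a, b} = {δ(ε_r, ε_s), δ(ε_s, ε_t)}`. -/
def JAdj {n l : ℕ} (ε : Fin (l + 1) → Fin n → Bool) (a b : ℕ) : Prop :=
  (∃ i : Fin l, a = delta (ε i.castSucc) (ε i.succ)) ∧
  (∃ i : Fin l, b = delta (ε i.castSucc) (ε i.succ)) ∧ a ≠ b ∧
  ∃ r s t : Fin (l + 1), r < s ∧ s < t ∧
    ({a, b} : Finset ℕ) = {delta (ε r) (ε s), delta (ε s) (ε t)}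

/-- If `G` is a simple graph on `{1,…,n}` and `ε₁ < ⋯ < ε_{l+1}` is a chain in
`T = {0,1}ⁿ` all of whose triples receive colour `C₃` in the stepping-up
colouring, then every edge of the associated graph `J` is a non-edge of `G`;
that is, `J` is a subgraph of the complement of `G`. -/
theorem colour_three_J_in_complement {n l : ℕ} (G : SimpleGraph ℕ)
    (hG : ∀ a b, G.Adj a b → a < n ∧ b < n)
    (ε : Fin (l + 1) → Fin n → Bool)
    (hε : ∀ i j : Fin (l + 1), i < j → bval (ε i) < bval (ε j))
    (hcol : ∀ i j k : Fin (l + 1), i < j → j < k →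
      colour G (ε i) (ε j) (ε k) = 2) :
    ∀ a b : ℕ, JAdj ε a b → ¬ G.Adj a b := by
  rintro a b ⟨-, -, hab, r, s, t, hrs, hst, hpair⟩ hadj
  have hc := hcol r s t hrs hst
  unfold colour at hc
  have hnadj : ¬ G.Adj (delta (ε r) (ε s)) (delta (ε s) (ε t)) := by
    intro h
    rw [if_pos h] at hc
    split at hc <;> simp_all
  have ha : a ∈ ({delta (ε r) (ε s), delta (ε s) (ε t)} : Finset ℕ) := by
    rw [← hpair]; simp
  have hb : b ∈ ({delta (ε r) (ε s), delta (ε s) (ε t)} : Finset ℕ) := by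
    rw [← hpair]; simp
  simp only [Finset.mem_insert, Finset.mem_singleton] at ha hb
  rcases ha with h1 | h1 <;> rcases hb with h2 | h2 <;>
    first
      | exact hab (h1.trans h2.symm)
      | exact hnadj (h1 ▸ h2 ▸ hadj)
      | exact hnadj (h1 ▸ h2 ▸ hadj.symm)
end

section
/- Let 0 < c ≤ 1/4 and set p = 1 − (log₂ l · log₂ log₂ l)/l and n = ⌊l^(c·log₂ log₂ l)⌋. Then for all sufficiently large l, p^(l(l−1)/2) · C(n, l) ≤ exp(−(1/8)·l·log₂ l·log₂ log₂ l), where C(n,l) denotes the binomial coefficient. (This is the bound on the expected number of cliques of size l in the random graph G(n,p).) -/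
open Filter

set_option maxHeartbeats 1000000 in
/-- With `0 < c ≤ 1/4`, `p = 1 - log₂ l · log₂ log₂ l / l` and
`n = ⌊l ^ (c · log₂ log₂ l)⌋`, for all sufficiently large `l` the expected
number `p ^ (l(l-1)/2) · C(n, l)` of `l`-cliques in `G(n, p)` is at most
`exp(-(1/8) · l · log₂ l · log₂ log₂ l)`. -/
theorem expected_cliques_bound (c : ℝ) (hc0 : 0 < c) (hc : c ≤ 1 / 4) :
    ∀ᶠ l : ℕ in atTop,
      (1 - Real.logb 2 l * Real.logb 2 (Real.logb 2 l) / l) ^ (l * (l - 1) / 2) *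
          ((Nat.floor ((l : ℝ) ^ (c * Real.logb 2 (Real.logb 2 l)))).choose l : ℝ) ≤
        Real.exp (-(1 / 8) * l * Real.logb 2 l * Real.logb 2 (Real.logb 2 l)) := by
  have hlog2 : (0.6931471803 : ℝ) < Real.log 2 := Real.log_two_gt_d9
  have hlog2' : Real.log 2 < 0.6931471808 := Real.log_two_lt_d9
  have hE : ∀ᶠ x : ℝ in atTop,
      Real.log x ^ 2 / (1 * x + 0) ≤ Real.log 2 ^ 2 / 8 := by
    refine (Real.tendsto_pow_log_div_mul_add_atTop 1 0 2 one_ne_zero).eventually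
      (eventually_le_nhds ?_)
    positivity
  have hEn : ∀ᶠ l : ℕ in atTop, Real.log (l : ℝ) ^ 2 / (1 * (l : ℝ) + 0)
      ≤ Real.log 2 ^ 2 / 8 := tendsto_natCast_atTop_atTop.eventually hE
  filter_upwards [hEn, eventually_ge_atTop 16] with l hE1 hl16
  have hl16' : (16 : ℝ) ≤ (l : ℝ) := by exact_mod_cast hl16
  have hlpos : (0 : ℝ) < l := by linarith
  set L := Real.logb 2 (l : ℝ) with hLdef
  set LL := Real.logb 2 L with hLLdef
  -- basic bounds
  have hL4 : (4 : ℝ) ≤ L := by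
    have : Real.logb 2 (16 : ℝ) ≤ L :=
      Real.logb_le_logb_of_le one_lt_two (by norm_num) hl16'
    have h16 : Real.logb 2 (16 : ℝ) = 4 := by
      rw [show (16 : ℝ) = 2 ^ (4 : ℕ) by norm_num, Real.logb_pow,
        Real.logb_self_eq_one (by norm_num)]
      norm_num
    linarith
  have hLL2 : (2 : ℝ) ≤ LL := by
    have : Real.logb 2 (4 : ℝ) ≤ LL :=
      Real.logb_le_logb_of_le one_lt_two (by norm_num) hL4
    have h4 : Real.logb 2 (4 : ℝ) = 2 := by
      rw [show (4 : ℝ) = 2 ^ (2 : ℕ) by norm_num, Real.logb_pow,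
        Real.logb_self_eq_one (by norm_num)]
      norm_num
    linarith
  -- LL ≤ 2 L
  have hLL_le : LL ≤ 2 * L := by
    have h1 : Real.log L ≤ L := Real.log_le_self (by linarith)
    have : LL = Real.log L / Real.log 2 := rfl
    rw [this]
    rw [div_le_iff₀ (by linarith)]
    nlinarith
  -- L^2 ≤ l / 8
  have hL2 : L ^ 2 ≤ (l : ℝ) / 8 := by
    have hLd : L = Real.log (l : ℝ) / Real.log 2 := rfl
    rw [hLd, div_pow, div_le_div_iff₀ (by positivity) (by norm_num)]
    have : Real.log (l : ℝ) ^ 2 ≤ Real.log 2 ^ 2 / 8 * (l : ℝ) := by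
      rw [div_le_iff₀ (by linarith)] at hE1
      calc Real.log (l:ℝ) ^ 2 ≤ Real.log 2 ^ 2 / 8 * (1 * (l:ℝ) + 0) := hE1
        _ = Real.log 2 ^ 2 / 8 * (l : ℝ) := by ring
    nlinarith
  have hf_le : L * LL ≤ (l : ℝ) / 4 := by nlinarith
  set x := L * LL / (l : ℝ) with hxdef
  have hx0 : 0 ≤ x := by positivity
  have hx1 : x ≤ 1 / 4 := by
    rw [hxdef, div_le_iff₀ hlpos]; linarith
  -- exponent m
  set m := l * (l - 1) / 2 with hmdef
  have hmc : (m : ℝ) = (l : ℝ) * ((l : ℝ) - 1) / 2 := by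
    have hdvd : 2 ∣ l * (l - 1) := by
      rcases Nat.even_or_odd l with h | h
      · exact Dvd.dvd.mul_right h.two_dvd _
      · exact Dvd.dvd.mul_left (Nat.Odd.sub_odd h odd_one).two_dvd _
    rw [hmdef, Nat.cast_div hdvd (by norm_num)]
    push_cast [Nat.cast_sub (by omega : 1 ≤ l)]
    ring
  -- p^m ≤ exp (-x * m)
  have hp1 : (1 - x) ^ m ≤ Real.exp (-(x * m)) := by
    calc (1 - x) ^ m ≤ Real.exp (-x) ^ m := by
          apply pow_le_pow_left₀ (by linarith)
          linarith [Real.add_one_le_exp (-x)]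
      _ = Real.exp (-(x * m)) := by
          rw [← Real.exp_nat_mul]; ring_nf
  -- choose bound
  set n := Nat.floor ((l : ℝ) ^ (c * LL)) with hndef
  have hch : (n.choose l : ℝ) ≤ Real.exp (c * LL * l * (L * Real.log 2)) := by
    have h1 : (n.choose l : ℝ) ≤ (n : ℝ) ^ l := by
      exact_mod_cast Nat.cast_le.mpr (Nat.choose_le_pow n l)
    have h2 : (n : ℝ) ≤ (l : ℝ) ^ (c * LL) :=
      Nat.floor_le (Real.rpow_nonneg (le_of_lt hlpos) _)
    have h3 : ((l : ℝ) ^ (c * LL)) ^ l = (l : ℝ) ^ (c * LL * l) := by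
      rw [← Real.rpow_natCast ((l : ℝ) ^ (c * LL)) l, ← Real.rpow_mul (le_of_lt hlpos)]
    have h4 : (l : ℝ) ^ (c * LL * l) = Real.exp (c * LL * l * Real.log (l : ℝ)) := by
      rw [Real.rpow_def_of_pos hlpos, mul_comm]
    have hlogl : Real.log (l : ℝ) = L * Real.log 2 := by
      rw [hLdef, Real.logb, div_mul_cancel₀]
      exact Real.log_ne_zero_of_pos_of_ne_one (by norm_num) (by norm_num)
    calc (n.choose l : ℝ) ≤ (n : ℝ) ^ l := h1
      _ ≤ ((l : ℝ) ^ (c * LL)) ^ l := pow_le_pow_left₀ (Nat.cast_nonneg n) h2 l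
      _ = Real.exp (c * LL * l * (L * Real.log 2)) := by rw [h3, h4, hlogl]
  -- combine
  have hprod : (1 - x) ^ m * (n.choose l : ℝ) ≤
      Real.exp (-(x * m) + c * LL * l * (L * Real.log 2)) := by
    rw [Real.exp_add]
    exact mul_le_mul hp1 hch (Nat.cast_nonneg _) (Real.exp_nonneg _)
  refine le_trans (by rw [hxdef]; exact hprod) (Real.exp_le_exp.mpr ?_)
  -- final exponent inequality
  have hxm : x * m = L * LL * ((l : ℝ) - 1) / 2 := by
    rw [hxdef, hmc]; field_simp
  rw [hxm]
  have hc2 : c * Real.log 2 ≤ 0.1733 := by nlinarith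
  have key : c * Real.log 2 * (l : ℝ) + 1 / 8 * (l : ℝ) ≤ ((l : ℝ) - 1) / 2 := by
    nlinarith
  have hpos : (0 : ℝ) ≤ L * LL := by nlinarith
  have h2 := mul_le_mul_of_nonneg_left key hpos
  nlinarith [h2]
end

section
/- Let 0 < c ≤ 1/80 and set n = ⌊l^(c·log₂ log₂ l)⌋. Then for all sufficiently large l and every integer d with log₂(l+1) ≤ d ≤ l, d^d · ((log₂ l · log₂ log₂ l)/l)^((1/10)·d·log₂ log₂ (l+1)) · n^d ≤ exp(−(1/40)·d·log₂ l·log₂ log₂ l). (This bounds the expected number of copies in the complement of G(n,p), p = 1 − (log₂ l · log₂ log₂ l)/l, of graphs on d vertices with at least (1/10)·d·log₂ log₂(l+1) edges drawn from a family of at most d^d isomorphism types.) -/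
open Filter Real

lemma sq_div_four_le_exp {x : ℝ} (hx : 0 ≤ x) : x ^ 2 / 4 ≤ Real.exp x := by
  have h1 := Real.add_one_le_exp (x / 2)
  have h2 : Real.exp x = Real.exp (x / 2) * Real.exp (x / 2) := by
    rw [← Real.exp_add]; ring_nf
  nlinarith [Real.exp_pos (x / 2)]

lemma scalar_aux {c LL t : ℝ} (hc0 : 0 < c) (hc : c ≤ 1 / 80)
    (hLL : 1000 ≤ LL) (h1 : (0.6931471803 : ℝ) < t) (h2 : t < 0.6931471808) :
    1 + c * LL - LL / 20 ≤ -LL / (40 * t) := by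
  have ht0 : (0 : ℝ) < t := by linarith
  have hLL0 : (0 : ℝ) < LL := by linarith
  have hcLL : c * LL ≤ LL / 80 := by
    have := mul_le_mul_of_nonneg_right hc hLL0.le
    linarith
  have ha1 : (0.6931471803 : ℝ) * LL ≤ t * LL :=
    mul_le_mul_of_nonneg_right h1.le hLL0.le
  have ha3 : t * (c * LL) ≤ t * (LL / 80) :=
    mul_le_mul_of_nonneg_left hcLL ht0.le
  rw [le_div_iff₀ (by positivity : (0:ℝ) < 40 * t)]
  nlinarith [ha1, ha3]

/-- With `0 < c ≤ 1/80` and `n = ⌊l ^ (c · log₂ log₂ l)⌋`, for all sufficiently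
large `l` and every integer `d` with `log₂(l+1) ≤ d ≤ l`, the expected number
`d^d · ((log₂ l · log₂ log₂ l)/l) ^ ((1/10)·d·log₂ log₂ (l+1)) · n^d` of copies
in the complement of `G(n,p)` of graphs on `d` vertices with at least
`(1/10)·d·log₂ log₂(l+1)` edges, drawn from at most `d^d` isomorphism types,
is at most `exp(-(1/40) · d · log₂ l · log₂ log₂ l)`. -/
theorem expected_J_copies_bound (c : ℝ) (hc0 : 0 < c) (hc : c ≤ 1 / 80) :
    ∀ᶠ l : ℕ in atTop, ∀ d : ℕ,
      Real.logb 2 (l + 1) ≤ (d : ℝ) → d ≤ l →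
      (d : ℝ) ^ d *
          (Real.logb 2 l * Real.logb 2 (Real.logb 2 l) / l) ^
            ((1 / 10 : ℝ) * d * Real.logb 2 (Real.logb 2 (l + 1))) *
          ((Nat.floor ((l : ℝ) ^ (c * Real.logb 2 (Real.logb 2 l))) : ℝ)) ^ d ≤
        Real.exp (-(1 / 40) * d * Real.logb 2 l * Real.logb 2 (Real.logb 2 l)) := by
  have ht : Tendsto (fun l : ℕ => Real.logb 2 (Real.logb 2 l)) atTop atTop :=
    (Real.tendsto_logb_atTop one_lt_two).comp
      ((Real.tendsto_logb_atTop one_lt_two).comp tendsto_natCast_atTop_atTop)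
  filter_upwards [ht.eventually_ge_atTop 1000, eventually_ge_atTop 2] with l hLL1000 hl2
  intro d hd hdl
  have hl2' : (2 : ℝ) ≤ (l : ℝ) := by exact_mod_cast hl2
  have hl0 : (0 : ℝ) < l := by linarith
  set L := Real.logb 2 (l : ℝ) with hLdef
  set LL := Real.logb 2 L with hLLdef
  have hlog2 : (0.6931471803 : ℝ) < Real.log 2 := Real.log_two_gt_d9
  have hlog2' : Real.log 2 < 0.6931471808 := Real.log_two_lt_d9
  have hlog2pos : (0 : ℝ) < Real.log 2 := by linarith
  have hlogl : 0 < Real.log l := Real.log_pos (by linarith)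
  have hL1 : (1 : ℝ) ≤ L := by
    have := Real.logb_le_logb_of_le one_lt_two (by norm_num : (0:ℝ) < 2) hl2'
    simpa using this
  have hL0 : (0 : ℝ) < L := by linarith
  have hLL0 : (0 : ℝ) < LL := by linarith
  -- log l = L * log 2, log L = LL * log 2
  have hlogl_eq : Real.log l = L * Real.log 2 := by
    rw [hLdef, Real.logb]; field_simp
  have hlogL_eq : Real.log L = LL * Real.log 2 := by
    rw [hLLdef, Real.logb]; field_simp
  -- L is huge: L ≥ (LL log2)^2/4
  have hLbig : (LL * Real.log 2) ^ 2 / 4 ≤ L := by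
    have h := sq_div_four_le_exp (x := LL * Real.log 2) (by positivity)
    rw [← hlogL_eq, Real.exp_log hL0] at h
    rw [← hlogL_eq]
    exact h
  -- key: log (L * LL) ≤ (1/2) log l
  have key2 : Real.log (L * LL) ≤ (1 / 2) * Real.log l := by
    rw [Real.log_mul (ne_of_gt hL0) (ne_of_gt hLL0), hlogl_eq, hlogL_eq]
    have hlogLL : Real.log LL ≤ LL - 1 := Real.log_le_sub_one_of_pos hLL0
    have h1 : (693 : ℝ) ≤ LL * Real.log 2 := by nlinarith
    have h2 : 119 * LL ≤ L := by
      nlinarith [mul_le_mul_of_nonneg_right h1 (by positivity : (0:ℝ) ≤ LL * Real.log 2),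
        mul_le_mul_of_nonneg_left hlog2.le hLL0.le]
    have h8 : 8 * LL ≤ L * Real.log 2 := by
      nlinarith [mul_le_mul_of_nonneg_left hlog2.le hLL0.le]
    have h9 : LL * Real.log 2 ≤ 0.7 * LL := by
      nlinarith [mul_le_mul_of_nonneg_left hlog2'.le hLL0.le]
    linarith
  -- d ≥ 1
  have hd1 : (1 : ℝ) ≤ (d : ℝ) := by
    have h1 : (1 : ℝ) ≤ Real.logb 2 ((l : ℝ) + 1) := by
      have := Real.logb_le_logb_of_le one_lt_two (by norm_num : (0:ℝ) < 2)
        (by linarith : (2:ℝ) ≤ (l:ℝ) + 1)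
      simpa using this
    linarith
  have hd0 : (0 : ℝ) ≤ (d : ℝ) := by linarith
  -- LL ≤ LL1
  set LL1 := Real.logb 2 (Real.logb 2 ((l : ℝ) + 1)) with hLL1def
  have hLLle : LL ≤ LL1 := by
    have h1 : L ≤ Real.logb 2 ((l : ℝ) + 1) :=
      Real.logb_le_logb_of_le one_lt_two hl0 (by linarith)
    exact Real.logb_le_logb_of_le one_lt_two hL0 h1
  -- factor bounds
  have hA : (d : ℝ) ^ d ≤ Real.exp ((d : ℝ) * Real.log l) := by
    have h1 : (d : ℝ) ^ d ≤ (l : ℝ) ^ d :=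
      pow_le_pow_left₀ hd0 (by exact_mod_cast hdl) d
    calc (d : ℝ) ^ d ≤ (l : ℝ) ^ d := h1
      _ = Real.exp ((d : ℝ) * Real.log l) := by
          rw [Real.exp_nat_mul, Real.exp_log hl0]
  set E := (1 / 10 : ℝ) * (d : ℝ) * LL1 with hEdef
  have hElb : (1 / 10 : ℝ) * (d : ℝ) * LL ≤ E := by
    rw [hEdef]
    exact mul_le_mul_of_nonneg_left hLLle (by positivity)
  have hE0 : (0 : ℝ) ≤ E := le_trans (by positivity) hElb
  have hx0 : (0 : ℝ) < L * LL / l := by positivity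
  have hB : (L * LL / (l : ℝ)) ^ E ≤ Real.exp (-(1 / 20) * (d : ℝ) * LL * Real.log l) := by
    rw [Real.rpow_def_of_pos hx0]
    apply Real.exp_le_exp.mpr
    have hlogx : Real.log (L * LL / l) ≤ -(1 / 2) * Real.log l := by
      rw [Real.log_div (by positivity) (ne_of_gt hl0)]
      linarith
    have h2 : Real.log (L * LL / l) * E ≤ (-(1 / 2) * Real.log l) * E :=
      mul_le_mul_of_nonneg_right hlogx hE0
    have h3 : (-(1 / 2) * Real.log l) * E ≤
        (-(1 / 2) * Real.log l) * ((1 / 10 : ℝ) * (d : ℝ) * LL) :=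
      mul_le_mul_of_nonpos_left hElb (by linarith)
    calc Real.log (L * LL / l) * E ≤ (-(1/2) * Real.log l) * ((1/10:ℝ) * d * LL) := le_trans h2 h3
      _ = -(1 / 20) * (d : ℝ) * LL * Real.log l := by ring
  have hnle : ((Nat.floor ((l : ℝ) ^ (c * LL)) : ℕ) : ℝ) ≤ (l : ℝ) ^ (c * LL) :=
    Nat.floor_le (Real.rpow_nonneg hl0.le _)
  have hC : ((Nat.floor ((l : ℝ) ^ (c * LL)) : ℕ) : ℝ) ^ d ≤
      Real.exp ((d : ℝ) * (Real.log l * (c * LL))) := by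
    calc ((Nat.floor ((l : ℝ) ^ (c * LL)) : ℕ) : ℝ) ^ d ≤ ((l : ℝ) ^ (c * LL)) ^ d :=
          pow_le_pow_left₀ (by positivity) hnle d
      _ = Real.exp ((d : ℝ) * (Real.log l * (c * LL))) := by
          rw [Real.rpow_def_of_pos hl0, ← Real.exp_nat_mul]
  -- combine
  have hBnn : (0:ℝ) ≤ (L * LL / (l : ℝ)) ^ E := (Real.rpow_pos_of_pos hx0 E).le
  have hchain : (d : ℝ) ^ d * (L * LL / (l : ℝ)) ^ E *
      ((Nat.floor ((l : ℝ) ^ (c * LL)) : ℕ) : ℝ) ^ d ≤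
      Real.exp ((d : ℝ) * Real.log l) * Real.exp (-(1 / 20) * (d : ℝ) * LL * Real.log l) *
        Real.exp ((d : ℝ) * (Real.log l * (c * LL))) := by
    apply mul_le_mul _ hC (by positivity) (by positivity)
    exact mul_le_mul hA hB hBnn (Real.exp_pos _).le
  refine le_trans hchain ?_
  rw [← Real.exp_add, ← Real.exp_add]
  apply Real.exp_le_exp.mpr
  -- scalar inequality
  have hp : 1 + c * LL - LL / 20 ≤ -LL / (40 * Real.log 2) :=
    scalar_aux hc0 hc hLL1000 hlog2 hlog2'
  have hmul : (d : ℝ) * Real.log l * (1 + c * LL - LL / 20) ≤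
      (d : ℝ) * Real.log l * (-LL / (40 * Real.log 2)) :=
    mul_le_mul_of_nonneg_left hp (by positivity)
  have heq : (d : ℝ) * Real.log l * (-LL / (40 * Real.log 2)) =
      -(1 / 40) * (d : ℝ) * L * LL := by
    rw [hlogl_eq]; field_simp
  calc (d : ℝ) * Real.log l + -(1 / 20) * (d : ℝ) * LL * Real.log l +
        (d : ℝ) * (Real.log l * (c * LL))
      = (d : ℝ) * Real.log l * (1 + c * LL - LL / 20) := by ring
    _ ≤ (d : ℝ) * Real.log l * (-LL / (40 * Real.log 2)) := hmul
    _ = -(1 / 40) * (d : ℝ) * L * LL := heq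
end

section
/- Let d ≥ m ≥ 1 be integers with d − m + 1 ≥ 1, let i₀ = ⌊log₂(d − m + 1)⌋, and suppose i₀ ≤ m. If t_1, …, t_m are natural numbers satisfying t_i ≤ 2^i − 1 and t_i ≤ d − m + i for every 1 ≤ i ≤ m, then Σ_{i=1}^m t_i ≤ 2(d − m + 1) + d·(m − i₀) − (m − i₀)(m − i₀ − 1)/2. -/
private lemma pow_sum_Ioc (n : ℕ) : ∑ i ∈ Finset.Ioc 0 n, 2 ^ i = 2 ^ (n + 1) - 2 := by
  induction n with
  | zero => simp
  | succ n ih =>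
      rw [Finset.sum_Ioc_succ_top (Nat.zero_le n), ih]
      have : 2 ≤ 2 ^ (n + 1) := Nat.one_lt_two_pow (by omega)
      ring_nf
      omega

private lemma gauss_Ioc (n k : ℕ) :
    2 * ∑ i ∈ Finset.Ioc n (n + k), i = k * (2 * n + k + 1) := by
  induction k with
  | zero => simp
  | succ k ih =>
      rw [show n + (k + 1) = (n + k) + 1 by ring,
        Finset.sum_Ioc_succ_top (by omega)]
      ring_nf
      ring_nf at ih
      omega

/-- The upper bound on `t₁ + ⋯ + t_m` used to lower-bound the number of edges
of the graph `J`: if `d ≥ m ≥ 1`, `i₀ = ⌊log₂(d - m + 1)⌋ ≤ m`, and the natural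
numbers `t_i` satisfy `t_i ≤ 2^i - 1` and `t_i ≤ d - m + i` for `1 ≤ i ≤ m`,
then `Σ_{i=1}^m t_i ≤ 2(d - m + 1) + d(m - i₀) - (m - i₀)(m - i₀ - 1)/2`. -/
theorem sum_t_upper_bound (d m : ℕ) (hm : 1 ≤ m) (hmd : m ≤ d)
    (hi₀ : Nat.log 2 (d - m + 1) ≤ m) (t : ℕ → ℕ)
    (ht1 : ∀ i, 1 ≤ i → i ≤ m → t i ≤ 2 ^ i - 1)
    (ht2 : ∀ i, 1 ≤ i → i ≤ m → t i ≤ d - m + i) :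
    ((∑ i ∈ Finset.Icc 1 m, t i : ℕ) : ℝ) ≤
      2 * ((d - m + 1 : ℕ) : ℝ) +
        (d : ℝ) * ((m - Nat.log 2 (d - m + 1) : ℕ) : ℝ) -
        ((m - Nat.log 2 (d - m + 1) : ℕ) : ℝ) *
          (((m - Nat.log 2 (d - m + 1) : ℕ) : ℝ) - 1) / 2 := by
  set a := d - m with ha
  set i₀ := Nat.log 2 (a + 1) with hi0def
  set k := m - i₀ with hkdef
  have hd : d = m + a := by omega
  have hm' : m = i₀ + k := by omega
  have hpow : 2 ^ i₀ ≤ a + 1 := Nat.pow_log_le_self 2 (by omega)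
  -- split the sum
  have hIcc : Finset.Icc 1 m = Finset.Ioc 0 m := by
    ext x; simp [Nat.lt_iff_add_one_le]
  have hsplit : ∑ i ∈ Finset.Icc 1 m, t i =
      ∑ i ∈ Finset.Ioc 0 i₀, t i + ∑ i ∈ Finset.Ioc i₀ m, t i := by
    rw [hIcc]
    exact (Finset.sum_Ioc_consecutive _ (Nat.zero_le _) hi₀).symm
  -- bound on the first part
  have hb1 : ∑ i ∈ Finset.Ioc 0 i₀, t i ≤ 2 ^ (i₀ + 1) - 2 := by
    rw [← pow_sum_Ioc]
    refine Finset.sum_le_sum fun i hi => ?_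
    rw [Finset.mem_Ioc] at hi
    calc t i ≤ 2 ^ i - 1 := ht1 i hi.1 (le_trans hi.2 hi₀)
      _ ≤ 2 ^ i := Nat.sub_le _ _
  have hb1' : 2 * ∑ i ∈ Finset.Ioc 0 i₀, t i ≤ 4 * a := by
    have h2 : (2:ℕ) ≤ 2 ^ (i₀ + 1) := Nat.one_lt_two_pow (by omega)
    have h3 : 2 ^ (i₀ + 1) = 2 * 2 ^ i₀ := by ring
    omega
  -- bound on the second part
  have hb2 : 2 * ∑ i ∈ Finset.Ioc i₀ m, t i
      ≤ 2 * (k * a) + 2 * (k * i₀) + k * k + k := by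
    have h1 : ∑ i ∈ Finset.Ioc i₀ m, t i ≤ ∑ i ∈ Finset.Ioc i₀ m, (a + i) := by
      refine Finset.sum_le_sum fun i hi => ?_
      rw [Finset.mem_Ioc] at hi
      exact ht2 i (by omega) hi.2
    have h2 : ∑ i ∈ Finset.Ioc i₀ m, (a + i) = k * a + ∑ i ∈ Finset.Ioc i₀ m, i := by
      rw [Finset.sum_add_distrib, Finset.sum_const, smul_eq_mul, Nat.card_Ioc]
    have h3 : 2 * ∑ i ∈ Finset.Ioc i₀ m, i = k * (2 * i₀ + k + 1) := by
      rw [show m = i₀ + k from hm']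
      exact gauss_Ioc i₀ k
    have h4 : k * (2 * i₀ + k + 1) = 2 * (k * i₀) + k * k + k := by ring
    calc 2 * ∑ i ∈ Finset.Ioc i₀ m, t i
        ≤ 2 * ∑ i ∈ Finset.Ioc i₀ m, (a + i) := by omega
      _ = 2 * (k * a) + 2 * ∑ i ∈ Finset.Ioc i₀ m, i := by rw [h2]; ring
      _ = 2 * (k * a) + 2 * (k * i₀) + k * k + k := by rw [h3, h4]; ring
  -- main natural-number inequality
  have hdk : 2 * d * k = 2 * (k * a) + 2 * (k * i₀) + 2 * (k * k) := by
    rw [hd, hm']; ring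
  have hmain : 2 * ∑ i ∈ Finset.Icc 1 m, t i + k * k
      ≤ 4 * (a + 1) + 2 * d * k + k := by
    rw [hsplit]
    have : 2 * (∑ i ∈ Finset.Ioc 0 i₀, t i + ∑ i ∈ Finset.Ioc i₀ m, t i)
        = 2 * ∑ i ∈ Finset.Ioc 0 i₀, t i + 2 * ∑ i ∈ Finset.Ioc i₀ m, t i := by ring
    rw [this, hdk]
    omega
  -- cast to ℝ
  have hc1 : ((d - m + 1 : ℕ) : ℝ) = (a : ℝ) + 1 := by rw [← ha]; push_cast; ring
  rw [hc1]
  have H : ((2 * ∑ i ∈ Finset.Icc 1 m, t i + k * k : ℕ) : ℝ)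
      ≤ ((4 * (a + 1) + 2 * d * k + k : ℕ) : ℝ) := Nat.cast_le.2 hmain
  push_cast at H ⊢
  linarith [H]
end
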